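/- Suppose the flow is a curvature-dependent binormal flow, i.e. ν = μ = 0 and α(s,t) = g(k(s,t)) for a smooth function g : ℝ → ℝ, and let G be an antiderivative of g. Then the function R₀(s,t) = g(k)k − G(k) satisfies ∂R₀/∂s = (i/2)(ω ψ̄ − ω̄ ψ), where ω = ⟨∂M/∂t, T⟩. -/

import Mathlib

open scoped BigOperators RealInnerProductSpace
open Complex

noncomputable section

abbrev E3 : Type := EuclideanSpace ℝ (Fin 3)

/-- Partial derivative with respect to the first (arclength) variable. -/
noncomputable def dS {V : Type} [NormedAddCommGroup V] [NormedSpace ℝ V]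
    (F : ℝ → ℝ → V) : ℝ → ℝ → V := fun s t => deriv (fun x => F x t) s

/-- Partial derivative with respect to the second (time) variable. -/
noncomputable def dT {V : Type} [NormedAddCommGroup V] [NormedSpace ℝ V]
    (F : ℝ → ℝ → V) : ℝ → ℝ → V := fun s t => deriv (fun x => F s x) t

/-- Complexification of a real vector in `ℝ³`. -/
noncomputable def cvec (v : E3) : Fin 3 → ℂ := fun i => (v i : ℂ)

/-- Bilinear extension of the real inner product to `ℂ³`. -/
noncomputable def cip (u v : Fin 3 → ℂ) : ℂ := ∑ i, u i * v i

/-- The phase `θ(s,t) = ∫₀^s τ(s',t) ds'`. -/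
noncomputable def θf (τ : ℝ → ℝ → ℝ) : ℝ → ℝ → ℝ :=
  fun s t => ∫ x in (0:ℝ)..s, τ x t

/-- The Hasimoto wave function `ψ = k e^{iθ}`. -/
noncomputable def ψf (k τ : ℝ → ℝ → ℝ) : ℝ → ℝ → ℂ :=
  fun s t => (k s t : ℂ) * Complex.exp (Complex.I * (θf τ s t : ℂ))

/-- The complexified frame vector `M = (N + iB) e^{iθ}`. -/
noncomputable def Mf (N B : ℝ → ℝ → E3) (τ : ℝ → ℝ → ℝ) : ℝ → ℝ → (Fin 3 → ℂ) :=
  fun s t => Complex.exp (Complex.I * (θf τ s t : ℂ)) •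
    (cvec (N s t) + Complex.I • cvec (B s t))

/-- `ω = ⟨∂M/∂t, T⟩` (bilinear inner product). -/
noncomputable def ωf (T N B : ℝ → ℝ → E3) (τ : ℝ → ℝ → ℝ) : ℝ → ℝ → ℂ :=
  fun s t => cip (dT (Mf N B τ) s t) (cvec (T s t))

lemma hasDerivAt_sliceS {V : Type} [NormedAddCommGroup V] [NormedSpace ℝ V]
    {F : ℝ → ℝ → V} (h : ContDiff ℝ (⊤ : ℕ∞) (Function.uncurry F)) (s t : ℝ) :
    HasDerivAt (fun x => F x t) (dS F s t) s := by
  have hd : Differentiable ℝ (fun x : ℝ => F x t) :=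
    (h.differentiable (by simp)).comp (differentiable_id.prodMk (differentiable_const t))
  exact (hd s).hasDerivAt

lemma hasDerivAt_sliceT {V : Type} [NormedAddCommGroup V] [NormedSpace ℝ V]
    {F : ℝ → ℝ → V} (h : ContDiff ℝ (⊤ : ℕ∞) (Function.uncurry F)) (s t : ℝ) :
    HasDerivAt (fun x => F s x) (dT F s t) t := by
  have hd : Differentiable ℝ (fun x : ℝ => F s x) :=
    (h.differentiable (by simp)).comp ((differentiable_const s).prodMk differentiable_id)
  exact (hd t).hasDerivAt

def cvecL : E3 →L[ℝ] (Fin 3 → ℂ) :=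
  ContinuousLinearMap.pi (fun i => Complex.ofRealCLM.comp (EuclideanSpace.proj i))

lemma cvecL_apply (v : E3) : cvecL v = cvec v := rfl

lemma cip_smul_left (c : ℂ) (u v : Fin 3 → ℂ) : cip (c • u) v = c * cip u v := by
  simp [cip, Finset.mul_sum, mul_assoc]

lemma cip_add_left (u w v : Fin 3 → ℂ) : cip (u + w) v = cip u v + cip w v := by
  simp [cip, add_mul, Finset.sum_add_distrib]

lemma cip_cvec (u v : E3) : cip (cvec u) (cvec v) = ((⟪u, v⟫ : ℝ) : ℂ) := by
  simp only [cip, cvec, PiLp.inner_apply, RCLike.inner_apply, conj_trivial]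
  push_cast
  exact Finset.sum_congr rfl fun _ _ => mul_comm _ _

lemma theta_hasDeriv {τ : ℝ → ℝ → ℝ} (hτ : ContDiff ℝ (⊤ : ℕ∞) (Function.uncurry τ)) (s t : ℝ) :
    ∃ d, HasDerivAt (fun t' => θf τ s t') d t := by
  set φ : ℝ → ℝ → ℝ := fun x t' => fderiv ℝ (Function.uncurry τ) (x, t') (0, 1) with hφ
  have hφd : ∀ x t', HasDerivAt (fun y => τ x y) (φ x t') t' := by
    intro x t'
    have h1 : HasFDerivAt (Function.uncurry τ) (fderiv ℝ (Function.uncurry τ) (x, t')) (x, t') :=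
      (hτ.differentiable (by simp) (x, t')).hasFDerivAt
    have h2 : HasDerivAt (fun y : ℝ => ((x, y) : ℝ × ℝ)) (((0 : ℝ), (1 : ℝ))) t' :=
      (hasDerivAt_const t' x).prodMk (hasDerivAt_id t')
    exact h1.comp_hasDerivAt t' h2
  have hφc : Continuous (fun p : ℝ × ℝ => φ p.1 p.2) := by
    have h1 : Continuous (fderiv ℝ (Function.uncurry τ)) := hτ.continuous_fderiv (by simp)
    exact h1.clm_apply continuous_const
  obtain ⟨C, hC⟩ := (IsCompact.prod isCompact_uIcc
    (isCompact_closedBall t 1)).exists_bound_of_continuousOn hφc.continuousOn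
  have key := intervalIntegral.hasDerivAt_integral_of_dominated_loc_of_deriv_le
    (F := fun t' x => τ x t') (F' := fun t' x => φ x t') (x₀ := t) (a := 0) (b := s)
    (bound := fun _ => C) (μ := MeasureTheory.volume) (Metric.ball_mem_nhds t one_pos)
    (Filter.Eventually.of_forall fun t' =>
      ((hτ.continuous.comp (continuous_id.prodMk continuous_const)).aestronglyMeasurable))
    ((hτ.continuous.comp (continuous_id.prodMk continuous_const)).intervalIntegrable 0 s)
    ((hφc.comp (continuous_id.prodMk continuous_const)).aestronglyMeasurable)
    (MeasureTheory.ae_of_all _ fun x hx t' ht' =>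
      hC (x, t') ⟨Set.uIoc_subset_uIcc hx, Metric.ball_subset_closedBall ht'⟩)
    intervalIntegrable_const
    (MeasureTheory.ae_of_all _ fun x _ t' _ => hφd x t')
  exact ⟨_, key.2⟩

theorem stmt8
    (γ T N B : ℝ → ℝ → E3) (k τ : ℝ → ℝ → ℝ)
    (hγsm : ContDiff ℝ (⊤ : ℕ∞) (Function.uncurry γ))
    (hTsm : ContDiff ℝ (⊤ : ℕ∞) (Function.uncurry T))
    (hNsm : ContDiff ℝ (⊤ : ℕ∞) (Function.uncurry N))
    (hBsm : ContDiff ℝ (⊤ : ℕ∞) (Function.uncurry B))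
    (hksm : ContDiff ℝ (⊤ : ℕ∞) (Function.uncurry k))
    (hτsm : ContDiff ℝ (⊤ : ℕ∞) (Function.uncurry τ))
    (hkpos : ∀ s t, 0 < k s t)
    (hTdef : ∀ s t, dS γ s t = T s t)
    (horth : ∀ s t, ⟪T s t, T s t⟫ = 1 ∧ ⟪N s t, N s t⟫ = 1 ∧
      ⟪B s t, B s t⟫ = 1 ∧ ⟪T s t, N s t⟫ = 0 ∧
      ⟪T s t, B s t⟫ = 0 ∧ ⟪N s t, B s t⟫ = 0)
    (hFS1 : ∀ s t, dS T s t = k s t • N s t)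
    (hFS2 : ∀ s t, dS N s t = -(k s t) • T s t + τ s t • B s t)
    (hFS3 : ∀ s t, dS B s t = -(τ s t) • N s t)
    (ν μ α : ℝ → ℝ → ℝ)
    (hνsm : ContDiff ℝ (⊤ : ℕ∞) (Function.uncurry ν))
    (hμsm : ContDiff ℝ (⊤ : ℕ∞) (Function.uncurry μ))
    (hαsm : ContDiff ℝ (⊤ : ℕ∞) (Function.uncurry α))
    (hkin : ∀ s t, dT γ s t = ν s t • T s t + μ s t • N s t + α s t • B s t)
    (hmixγ : ∀ s t, dS (dT γ) s t = dT (dS γ) s t)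
    (hmixT : ∀ s t, dS (dT T) s t = dT (dS T) s t)
    (hmixN : ∀ s t, dS (dT N) s t = dT (dS N) s t)
    (hmixB : ∀ s t, dS (dT B) s t = dT (dS B) s t)
    (g G : ℝ → ℝ)
    (hg : ContDiff ℝ (⊤ : ℕ∞) g)
    (hG : ∀ x, HasDerivAt G (g x) x)
    (hν0 : ∀ s t, ν s t = 0)
    (hμ0 : ∀ s t, μ s t = 0)
    (hαg : ∀ s t, α s t = g (k s t))
    :
    ∀ s t, ((dS (fun s' t' => g (k s' t') * k s' t' - G (k s' t')) s t : ℝ) : ℂ) =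
      Complex.I / 2 * (ωf T N B τ s t * starRingEnd ℂ (ψf k τ s t) -
        starRingEnd ℂ (ωf T N B τ s t) * ψf k τ s t) := by
  intro s t
  set kv := k s t with hkv
  set τv := τ s t with hτv
  have hks : HasDerivAt (fun x => k x t) (dS k s t) s := hasDerivAt_sliceS hksm s t
  set ks := dS k s t with hksdef
  set As : ℝ := deriv g kv * ks with hAsdef
  have hgat : HasDerivAt g (deriv g kv) kv := (hg.differentiable (by simp) kv).hasDerivAt
  have hAs : HasDerivAt (fun x => g (k x t)) As s := by
    exact hgat.comp s hks
  -- LHS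
  have hLHS : dS (fun s' t' => g (k s' t') * k s' t' - G (k s' t')) s t = kv * As := by
    have hGat : HasDerivAt (fun x => G (k x t)) (g kv * ks) s := by
      exact (hG kv).comp s hks
    have hL : HasDerivAt (fun x => g (k x t) * k x t - G (k x t))
        (As * kv + g kv * ks - g kv * ks) s := (hAs.mul hks).sub hGat
    have := hL.deriv
    simp only [dS]
    rw [this]; ring
  -- T_t
  have hkinB : ∀ s' t', dT γ s' t' = g (k s' t') • B s' t' := by
    intro s' t'
    rw [hkin, hν0, hμ0, hαg]; simp
  have hB's : HasDerivAt (fun x => B x t) (dS B s t) s := hasDerivAt_sliceS hBsm s t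
  have hTt : dT T s t = g kv • (-τv • N s t) + As • B s t := by
    have h1 : dT T s t = dS (dT γ) s t := by
      rw [hmixγ]
      simp only [dT]
      congr 1
      funext x
      rw [show dS γ s x = T s x from hTdef s x]
    have h2 : HasDerivAt (fun x => g (k x t) • B x t)
        (g kv • dS B s t + As • B s t) s := hAs.smul hB's
    have h3 : dS (dT γ) s t = g kv • dS B s t + As • B s t := by
      simp only [dS]
      have : (fun x => dT γ x t) = fun x => g (k x t) • B x t := funext fun x => hkinB x t
      rw [this]
      exact h2.deriv
    rw [h1, h3, hFS3]
  -- time derivatives of frame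
  have hN't : HasDerivAt (fun x => N s x) (dT N s t) t := hasDerivAt_sliceT hNsm s t
  have hB't : HasDerivAt (fun x => B s x) (dT B s t) t := hasDerivAt_sliceT hBsm s t
  have hT't : HasDerivAt (fun x => T s x) (dT T s t) t := hasDerivAt_sliceT hTsm s t
  -- inner product identities
  have hinner : ∀ (X : ℝ → ℝ → E3), HasDerivAt (fun x => X s x) (dT X s t) t →
      (∀ x, ⟪X s x, T s x⟫ = (0:ℝ)) → ⟪dT X s t, T s t⟫ = -⟪X s t, dT T s t⟫ := by
    intro X hX h0
    have hprod : HasDerivAt (fun x => (⟪X s x, T s x⟫ : ℝ))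
        (⟪X s t, dT T s t⟫ + ⟪dT X s t, T s t⟫) t := hX.inner ℝ hT't
    have hconst : (fun x => (⟪X s x, T s x⟫ : ℝ)) = fun _ => (0:ℝ) := funext fun x => h0 x
    rw [hconst] at hprod
    have := hprod.unique (hasDerivAt_const t 0)
    linarith
  have hNTt : ⟪dT N s t, T s t⟫ = g kv * τv := by
    have h1 := hinner N hN't (fun x => by rw [real_inner_comm]; exact (horth s x).2.2.2.1)
    rw [h1, hTt, inner_add_right, real_inner_smul_right, real_inner_smul_right,
      real_inner_smul_right, (horth s t).2.1, (horth s t).2.2.2.2.2]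
    ring
  have hBTt : ⟪dT B s t, T s t⟫ = -As := by
    have h1 := hinner B hB't (fun x => by rw [real_inner_comm]; exact (horth s x).2.2.2.2.1)
    have hBN : ⟪B s t, N s t⟫ = (0:ℝ) := by rw [real_inner_comm]; exact (horth s t).2.2.2.2.2
    rw [h1, hTt, inner_add_right, real_inner_smul_right, real_inner_smul_right,
      real_inner_smul_right, (horth s t).2.2.1, hBN]
    ring
  -- derivative of M in time
  obtain ⟨θt, hθt⟩ := theta_hasDeriv hτsm s t
  set θv := θf τ s t with hθv
  set e := Complex.exp (Complex.I * (θv : ℂ)) with he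
  have hexp : HasDerivAt (fun t' => Complex.exp (Complex.I * (θf τ s t' : ℂ)))
      (e * (Complex.I * θt)) t := by
    have h1 : HasDerivAt (fun t' => Complex.I * (θf τ s t' : ℂ)) (Complex.I * (θt : ℂ)) t :=
      (hθt.ofReal_comp).const_mul Complex.I
    exact h1.cexp
  have hNc : HasDerivAt (fun t' => cvec (N s t')) (cvec (dT N s t)) t := by
    have := cvecL.hasFDerivAt.comp_hasDerivAt t hN't
    exact this
  have hBc : HasDerivAt (fun t' => cvec (B s t')) (cvec (dT B s t)) t := by
    have := cvecL.hasFDerivAt.comp_hasDerivAt t hB't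
    exact this
  have hW : HasDerivAt (fun t' => cvec (N s t') + Complex.I • cvec (B s t'))
      (cvec (dT N s t) + Complex.I • cvec (dT B s t)) t := hNc.add (hBc.const_smul Complex.I)
  have hM : HasDerivAt (fun t' => Mf N B τ s t')
      (e • (cvec (dT N s t) + Complex.I • cvec (dT B s t)) +
        (e * (Complex.I * θt)) • (cvec (N s t) + Complex.I • cvec (B s t))) t := by
    exact hexp.smul hW
  have hMt : dT (Mf N B τ) s t =
      e • (cvec (dT N s t) + Complex.I • cvec (dT B s t)) +
        (e * (Complex.I * θt)) • (cvec (N s t) + Complex.I • cvec (B s t)) := by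
    simp only [dT]
    exact hM.deriv
  -- ω
  have hNT0 : ⟪N s t, T s t⟫ = (0:ℝ) := by rw [real_inner_comm]; exact (horth s t).2.2.2.1
  have hBT0 : ⟪B s t, T s t⟫ = (0:ℝ) := by rw [real_inner_comm]; exact (horth s t).2.2.2.2.1
  have hω : ωf T N B τ s t = e * (((g kv * τv : ℝ) : ℂ) - Complex.I * (As : ℂ)) := by
    rw [ωf, hMt, cip_add_left, cip_smul_left, cip_smul_left, cip_add_left, cip_add_left,
      cip_smul_left, cip_smul_left, cip_cvec, cip_cvec, cip_cvec, cip_cvec,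
      hNTt, hBTt, hNT0, hBT0]
    push_cast
    ring
  -- conj facts
  have hconj_e : starRingEnd ℂ e = Complex.exp (-(Complex.I * (θv : ℂ))) := by
    rw [he, ← Complex.exp_conj]
    congr 1
    simp
  have hee : e * Complex.exp (-(Complex.I * (θv : ℂ))) = 1 := by
    rw [← Complex.exp_add]
    simp
  have hψ : ψf k τ s t = (kv : ℂ) * e := rfl
  have hconjψ : starRingEnd ℂ (ψf k τ s t) = (kv : ℂ) * Complex.exp (-(Complex.I * (θv : ℂ))) := by
    rw [hψ, map_mul, hconj_e, Complex.conj_ofReal]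
  have hconjω : starRingEnd ℂ (ωf T N B τ s t) =
      Complex.exp (-(Complex.I * (θv : ℂ))) * (((g kv * τv : ℝ) : ℂ) + Complex.I * (As : ℂ)) := by
    rw [hω, map_mul, hconj_e, map_sub, map_mul, Complex.conj_ofReal, Complex.conj_ofReal,
      Complex.conj_I]
    ring
  rw [hLHS, hconjψ, hconjω, hω, hψ]
  push_cast
  linear_combination (Complex.I * Complex.I * (kv : ℂ) * (As : ℂ)) * hee +
    ((kv : ℂ) * (As : ℂ)) * Complex.I_mul_I
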